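/- arXiv:1812.05010 — 4 statements merged into one kernel-verified Lean document; each statement's English description precedes it below -/
import Mathlib

section
/- Let G be a locally compact second countable group and let {Γ_n} be a mostly Farber sequence of lattices in G. If the sequence {Γ_n} is nowhere thin, then {Γ_n} is a Farber sequence. -/
open MeasureTheory Filter Topology
open scoped ENNReal

noncomputable section

variable (G : Type*) [Group G] [TopologicalSpace G] [IsTopologicalGroup G]
  [LocallyCompactSpace G] [SecondCountableTopology G]
  [MeasurableSpace G] [BorelSpace G]

/-- `Γ` is a lattice in `G`: a discrete subgroup together with a Borel fundamental domain
`s` for the right translation action of `Γ` on `G` of finite Haar measure (the covolume). -/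
def IsLatticeWithFundDom (lam : Measure G) (Γ : Subgroup G) (s : Set G) : Prop :=
  DiscreteTopology Γ ∧ MeasurableSet s ∧ (∀ g : G, ∃! γ : Γ, g * (γ : G) ∈ s) ∧ lam s < ⊤

/-- The sequence of lattices `Γ n` (with fundamental domains `s n`) is Farber: for every
precompact neighborhood `U` of the identity, the normalized Haar measure of the set of
`g ∈ s n` such that `g (Γ n) g⁻¹ ∩ U ≠ {1}` tends to `0`. -/
def IsFarberSeq (lam : Measure G) (Γ : ℕ → Subgroup G) (s : ℕ → Set G) : Prop :=
  ∀ U : Set G, U ∈ 𝓝 (1 : G) → IsCompact (closure U) →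
    Tendsto (fun n => lam {g ∈ s n | ∃ γ ∈ Γ n, γ ≠ 1 ∧ g * γ * g⁻¹ ∈ U} / lam (s n))
      atTop (𝓝 0)

/-- The sequence of lattices `Γ n` (with fundamental domains `s n`) is mostly Farber: for all
precompact neighborhoods `U ⊆ V` of the identity, the normalized Haar measure of the set of
`g ∈ s n` such that `g (Γ n) g⁻¹ ∩ V ⊆ U` tends to `1`. -/
def IsMostlyFarberSeq (lam : Measure G) (Γ : ℕ → Subgroup G) (s : ℕ → Set G) : Prop :=
  ∀ U V : Set G, U ∈ 𝓝 (1 : G) → V ∈ 𝓝 (1 : G) → U ⊆ V →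
    IsCompact (closure U) → IsCompact (closure V) →
    Tendsto
      (fun n => lam {g ∈ s n | ∀ γ ∈ Γ n, g * γ * g⁻¹ ∈ V → g * γ * g⁻¹ ∈ U} / lam (s n))
      atTop (𝓝 1)

/-- The sequence of lattices `Γ n` is nowhere thin: there is a neighborhood `U` of the
identity such that `g (Γ n) g⁻¹ ∩ U = {1}` for every `g ∈ G` and every `n`. -/
def IsNowhereThin (Γ : ℕ → Subgroup G) : Prop :=
  ∃ U ∈ 𝓝 (1 : G), ∀ g : G, ∀ n : ℕ,
    ((fun γ => g * γ * g⁻¹) '' (Γ n : Set G)) ∩ U = {1}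

/-! Let `U₀` witness nowhere thinness, so every nontrivial conjugate `g γ g⁻¹` (`γ ∈ Γ n`) avoids
`U₀`. Given `U`, apply the mostly Farber property to `W = interior (U₀ ∩ closure U) ⊆ closure U`:
if `g` is good for this pair, a nontrivial conjugate in `U` would lie in `W ⊆ U₀`, which is
impossible. So the set where `U` meets a nontrivial conjugate lies in the complement of the
good set, whose proportion of the fundamental domain tends to `0`. -/

theorem measure_div_le_one_sub_measure_div {α : Type*} [MeasurableSpace α] {μ : Measure α}
    {s t u : Set α} (hs : μ s ≠ ∞) (ht : NullMeasurableSet t μ) (hts : t ⊆ s) (hu : u ⊆ s \ t) :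
    μ u / μ s ≤ 1 - μ t / μ s := by
  rcases eq_or_ne (μ s) 0 with h0 | h0
  · simp [measure_mono_null (hu.trans Set.sdiff_subset) h0]
  calc μ u / μ s ≤ μ (s \ t) / μ s := by gcongr
    _ = (μ s - μ t) / μ s := by rw [measure_sdiff hts ht (measure_ne_top_of_subset hts hs)]
    _ = 1 - μ t / μ s := by rw [ENNReal.sub_div fun _ _ => h0, ENNReal.div_self h0 hs]

theorem tendsto_measure_div_nhds_zero_of_subset_diff {ι α : Type*} [MeasurableSpace α]
    {μ : Measure α} {l : Filter ι} {s t u : ι → Set α} (hs : ∀ i, μ (s i) ≠ ∞)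
    (ht : ∀ i, NullMeasurableSet (t i) μ) (hts : ∀ i, t i ⊆ s i) (hu : ∀ i, u i ⊆ s i \ t i)
    (hlim : Tendsto (fun i => μ (t i) / μ (s i)) l (𝓝 1)) :
    Tendsto (fun i => μ (u i) / μ (s i)) l (𝓝 0) := by
  have hcompl : Tendsto (fun i => 1 - μ (t i) / μ (s i)) l (𝓝 0) := by
    simpa using ENNReal.Tendsto.sub tendsto_const_nhds hlim (Or.inl ENNReal.one_ne_top)
  exact tendsto_of_tendsto_of_tendsto_of_le_of_le tendsto_const_nhds hcompl (fun _ => zero_le)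
    fun i => measure_div_le_one_sub_measure_div (hs i) (ht i) (hts i) (hu i)

theorem measurableSet_setOf_forall_conj_mem_imp {H : Type*} [Group H] [MeasurableSpace H]
    [MeasurableMul₂ H] [MeasurableInv H] {Γ : Set H} (hΓ : Γ.Countable) {U V : Set H}
    (hU : MeasurableSet U) (hV : MeasurableSet V) :
    MeasurableSet {g : H | ∀ γ ∈ Γ, g * γ * g⁻¹ ∈ V → g * γ * g⁻¹ ∈ U} := by
  simp only [Set.ofPred_forall]
  refine MeasurableSet.biInter hΓ fun γ _ => ?_
  have hconj : Measurable fun g : H => g * γ * g⁻¹ := by fun_prop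
  exact (hV.preimage hconj).imp (hU.preimage hconj)

theorem eq_one_of_conj_mem_of_image_conj_inter_eq {H : Type*} [Group H] {Γ U : Set H} {g γ : H}
    (hΓU : (fun γ => g * γ * g⁻¹) '' Γ ∩ U = {1}) (hγ : γ ∈ Γ) (hγU : g * γ * g⁻¹ ∈ U) :
    γ = 1 :=
  conj_eq_one_iff.mp (hΓU.subset ⟨Set.mem_image_of_mem _ hγ, hγU⟩)

theorem isFarberSeq_of_isMostlyFarberSeq_of_nowhereThin
    (lam : Measure G)
    (Γ : ℕ → Subgroup G) (s : ℕ → Set G)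
    (hlattice : ∀ n, IsLatticeWithFundDom G lam (Γ n) (s n))
    (hmostly : IsMostlyFarberSeq G lam Γ s)
    (hthin : IsNowhereThin G Γ) :
    IsFarberSeq G lam Γ s := by
  obtain ⟨U₀, hU₀, hthinU₀⟩ := hthin
  intro U hU hUc
  set W := interior (U₀ ∩ closure U)
  have hWU₀ : W ⊆ U₀ := interior_subset.trans Set.inter_subset_left
  have hWU : W ⊆ closure U := interior_subset.trans Set.inter_subset_right
  have hUcl : closure U ∈ 𝓝 (1 : G) := Filter.mem_of_superset hU subset_closure
  have hW : W ∈ 𝓝 1 := interior_mem_nhds.2 (Filter.inter_mem hU₀ hUcl)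
  have hWc : IsCompact (closure W) :=
    hUc.of_isClosed_subset isClosed_closure (closure_minimal hWU isClosed_closure)
  have hgood := hmostly W (closure U) hW hUcl hWU hWc (by rwa [closure_closure])
  refine tendsto_measure_div_nhds_zero_of_subset_diff (fun n => (hlattice n).2.2.2.ne)
    (fun n => ?_) (fun n => Set.sep_subset _ _) (fun n => ?_) hgood
  · obtain ⟨hdisc, hs, -⟩ := hlattice n
    have hΓ : (Γ n : Set G).Countable :=
      (HereditarilyLindelofSpace.isLindelof _).countable hdisc
    exact (hs.inter (measurableSet_setOf_forall_conj_mem_imp hΓ isOpen_interior.measurableSet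
      isClosed_closure.measurableSet)).nullMeasurableSet
  · rintro g ⟨hgs, γ, hγ, hγ1, hγU⟩
    exact ⟨hgs, fun hg => hγ1 <| eq_one_of_conj_mem_of_image_conj_inter_eq (hthinU₀ g n) hγ
      (hWU₀ (hg.2 γ hγ (subset_closure hγU)))⟩

end
end

section
/- Let G be a topological group, let U ⊆ G be a symmetric neighborhood of the identity containing no nontrivial discrete subgroup of G, and let H ≤ G be a discrete subgroup such that H ∩ (U·U) ⊆ U. Then H ∩ (U·U) = {1}. -/
open scoped Pointwise

/-- If `H ∩ U·U ⊆ U` for a symmetric `U ∋ 1`, then `H ∩ U·U` is closed under products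
(they land in `U·U`) and inverses (`a⁻¹ = a⁻¹ · 1` with `a⁻¹ ∈ U`). -/
def Subgroup.interMulSelf {G : Type*} [Group G] (H : Subgroup G) (U : Set G) (h1U : (1 : G) ∈ U)
    (hsymm : U⁻¹ = U) (hsub : (H : Set G) ∩ (U * U) ⊆ U) : Subgroup G where
  carrier := (H : Set G) ∩ (U * U)
  one_mem' := ⟨H.one_mem, by simpa using Set.mul_mem_mul h1U h1U⟩
  mul_mem' ha hb := ⟨H.mul_mem ha.1 hb.1, Set.mul_mem_mul (hsub ha) (hsub hb)⟩
  inv_mem' {a} ha := by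
    have ha_inv : a⁻¹ ∈ U := by rw [← hsymm]; exact Set.inv_mem_inv.mpr (hsub ha)
    exact ⟨H.inv_mem ha.1, by simpa using Set.mul_mem_mul ha_inv h1U⟩

@[simp]
theorem Subgroup.coe_interMulSelf {G : Type*} [Group G] (H : Subgroup G) (U : Set G)
    (h1U : (1 : G) ∈ U) (hsymm : U⁻¹ = U) (hsub : (H : Set G) ∩ (U * U) ⊆ U) :
    (H.interMulSelf U h1U hsymm hsub : Set G) = (H : Set G) ∩ (U * U) :=
  rfl

theorem inter_mul_self_eq_one_of_noDiscreteSubgroup_general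
    (G : Type*) [Group G] [TopologicalSpace G]
    (U : Set G) (hU : U ∈ nhds (1 : G)) (hsymm : U⁻¹ = U)
    (hnodiscrete : ∀ K : Subgroup G, DiscreteTopology K → (K : Set G) ⊆ U → K = ⊥)
    (H : Subgroup G) (hdisc : DiscreteTopology H)
    (hsub : (H : Set G) ∩ (U * U) ⊆ U) :
    (H : Set G) ∩ (U * U) = {1} := by
  set K := H.interMulSelf U (mem_of_mem_nhds hU) hsymm hsub
  have hKdisc : DiscreteTopology K := DiscreteTopology.of_subset hdisc Set.inter_subset_left
  have hKbot : K = ⊥ := hnodiscrete K hKdisc hsub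
  simpa [K] using congrArg SetLike.coe hKbot

/-- If `U` is a symmetric neighborhood of the identity of a topological group `G` containing
no nontrivial discrete subgroup and `H` is a discrete subgroup such that `H ∩ U·U ⊆ U`,
then `H ∩ U·U = {1}`. -/
theorem inter_mul_self_eq_one_of_noDiscreteSubgroup
    (G : Type*) [Group G] [TopologicalSpace G] [IsTopologicalGroup G]
    (U : Set G) (hU : U ∈ nhds (1 : G)) (hsymm : U⁻¹ = U)
    (hnodiscrete : ∀ K : Subgroup G, DiscreteTopology K → (K : Set G) ⊆ U → K = ⊥)
    (H : Subgroup G) (hdisc : DiscreteTopology H)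
    (hsub : (H : Set G) ∩ (U * U) ⊆ U) :
    (H : Set G) ∩ (U * U) = {1} :=
  inter_mul_self_eq_one_of_noDiscreteSubgroup_general G U hU hsymm hnodiscrete H hdisc hsub
end

section
/- Let G be a locally compact second countable group acting measurably and measure-preservingly on a standard Borel probability space (X,μ). If the action is free, i.e. for every g ∈ G with g ≠ 1 one has gx ≠ x for μ-almost every x, then the action is measurably free: for every g ∈ G with g ≠ 1 there exists a countable family {A_n} of pairwise disjoint measurable subsets of X whose union is conull and such that gA_n ∩ A_n = ∅ for every n. -/
/-!
A standard Borel space embeds measurably into Cantor space `ℕ → Bool`. A point moved by a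
measurable map `f` therefore differs from its image in some coordinate `k`, and the set of points
whose `k`-th coordinate is `b` but changes under `f` is measurable and disjoint from its image.
Disjointing these countably many sets partitions the points moved by `a g`; freeness says that
the remaining fixed points are null.
-/

open MeasureTheory

section MovedPoints

variable {X : Type*} [MeasurableSpace X] [MeasurableSpace.CountablySeparated X] {f : X → X}

theorem exists_measurableSet_cover_setOf_ne (hf : Measurable f) :
    ∃ D : ℕ → Set X, (∀ n, MeasurableSet (D n)) ∧ (∀ n, Disjoint (f '' D n) (D n)) ∧
      {x | f x ≠ x} ⊆ ⋃ n, D n := by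
  obtain ⟨φ, hφ, hφ_inj⟩ := MeasurableSpace.measurable_injection_nat_bool_of_countablySeparated X
  -- `D (Nat.bit b k)`: the `k`-th coordinate is `b` at `x` and not at `f x`
  refine ⟨fun n => {x | φ x n.div2 = n.bodd ∧ φ (f x) n.div2 ≠ n.bodd}, fun n => ?_,
    fun n => ?_, fun x hx => ?_⟩
  · have hcoord : Measurable fun x => φ x n.div2 := (measurable_pi_apply _).comp hφ
    exact (measurableSet_eq_fun hcoord measurable_const).inter
      (measurableSet_eq_fun (hcoord.comp hf) measurable_const).compl
  · rw [Set.disjoint_left]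
    rintro _ ⟨x, hx, rfl⟩ hfx
    exact hx.2 hfx.1
  · obtain ⟨k, hk⟩ : ∃ k, φ x k ≠ φ (f x) k := Function.ne_iff.1 (hφ_inj.ne (Ne.symm hx))
    exact Set.mem_iUnion.2 ⟨Nat.bit (φ x k) k, by simp [Nat.bodd_bit, Nat.div2_bit, hk.symm]⟩

theorem exists_measurableSet_partition_setOf_ne (hf : Measurable f) :
    ∃ A : ℕ → Set X, (∀ n, MeasurableSet (A n)) ∧ Pairwise (Function.onFun Disjoint A) ∧
      (∀ n, Disjoint (f '' A n) (A n)) ∧ ⋃ n, A n = {x | f x ≠ x} := by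
  obtain ⟨D, hD, hD_moved, hD_cover⟩ := exists_measurableSet_cover_setOf_ne hf
  refine ⟨disjointed D, MeasurableSet.disjointed hD, disjoint_disjointed D,
    fun n => (hD_moved n).mono (Set.image_mono (disjointed_subset D n)) (disjointed_subset D n),
    ?_⟩
  rw [iUnion_disjointed]
  refine subset_antisymm (Set.iUnion_subset fun n x hx hfx => ?_) hD_cover
  exact Set.disjoint_left.1 (hD_moved n) (Set.mem_image_of_mem f hx) (hfx.symm ▸ hx)

end MovedPoints

variable (G : Type*) [Group G] [TopologicalSpace G] [IsTopologicalGroup G]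
  [LocallyCompactSpace G] [SecondCountableTopology G]
  [MeasurableSpace G] [BorelSpace G]

theorem measurablyFree_of_free
    (X : Type*) [MeasurableSpace X] [StandardBorelSpace X]
    (μ : Measure X) (a : G → X → X)
    (hmeas : Measurable (fun p : G × X => a p.1 p.2))
    (hfree : ∀ g : G, g ≠ 1 → ∀ᵐ x ∂μ, a g x ≠ x) :
    ∀ g : G, g ≠ 1 → ∃ A : ℕ → Set X,
      (∀ n, MeasurableSet (A n)) ∧
      Pairwise (Function.onFun Disjoint A) ∧
      μ (⋃ n, A n)ᶜ = 0 ∧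
      ∀ n, (a g '' A n) ∩ A n = ∅ := by
  intro g hg
  obtain ⟨A, hA, hA_disj, hA_moved, hA_union⟩ :=
    exists_measurableSet_partition_setOf_ne (hmeas.comp measurable_prodMk_left)
  refine ⟨A, hA, hA_disj, ?_, fun n => (hA_moved n).inter_eq⟩
  rw [hA_union]
  exact ae_iff.1 (hfree g hg)
end

section
/- Every finite simple graph in which every vertex has at least one neighbor admits a partition of its vertex set into parts of cardinality 2 or 3 such that any two vertices lying in the same part are at graph distance at most 2. -/
open Finset

/-- Any finset of cardinality at least 2 can be partitioned into parts of cardinality 2 or 3. -/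
lemma finset_split_two_three {α : Type*} [DecidableEq α] (s : Finset α) (hs : 2 ≤ s.card) :
    ∃ Q : Finpartition s, ∀ p ∈ Q.parts, p.card = 2 ∨ p.card = 3 := by
  generalize hn : s.card = n at hs
  induction n using Nat.strong_induction_on generalizing s with
  | _ n ih =>
    by_cases hn3 : n ≤ 3
    · have hne : s ≠ ⊥ := by
        rw [bot_eq_empty, ← Finset.nonempty_iff_ne_empty, ← Finset.card_pos]
        omega
      refine ⟨Finpartition.indiscrete hne, ?_⟩
      intro p hp
      have : p = s := by simpa [Finpartition.indiscrete] using hp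
      subst this
      omega
    · obtain ⟨t, hts, ht2⟩ := Finset.exists_subset_card_eq (show 2 ≤ s.card by omega)
      have hcard : (s \ t).card = n - 2 := by rw [Finset.card_sdiff_of_subset hts]; omega
      obtain ⟨Q, hQ⟩ := ih (n - 2) (by omega) (s \ t) hcard (by omega)
      have htne : t ≠ ⊥ := by
        rw [bot_eq_empty, ← Finset.nonempty_iff_ne_empty, ← Finset.card_pos]
        omega
      have hdisj : Disjoint (s \ t) t := Finset.sdiff_disjoint
      have hsup : (s \ t) ⊔ t = s := by
        rw [sup_eq_union]; exact Finset.sdiff_union_of_subset hts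
      refine ⟨Q.extend htne hdisj hsup, ?_⟩
      intro p hp
      rw [Finpartition.extend_parts, Finset.mem_insert] at hp
      rcases hp with rfl | hp
      · left; exact ht2
      · exact hQ p hp

/-- Every finite simple graph with no isolated vertex admits a partition of its vertex set
into parts of cardinality 2 or 3 such that any two vertices in the same part are at graph
distance at most 2. -/
theorem exists_finpartition_parts_card_two_or_three_dist_le_two
    (V : Type*) [Fintype V] [DecidableEq V] (G : SimpleGraph V)
    (hdeg : ∀ v : V, ∃ w : V, G.Adj v w) :
    ∃ P : Finpartition (Finset.univ : Finset V),
      ∀ p ∈ P.parts, (p.card = 2 ∨ p.card = 3) ∧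
        ∀ u ∈ p, ∀ v ∈ p, G.Reachable u v ∧ G.dist u v ≤ 2 := by
  classical
  letI : LinearOrder V := LinearOrder.lift' (Fintype.equivFin V) (Fintype.equivFin V).injective
  -- a maximum-cardinality matching
  set 𝒮 : Finset (Finset (Sym2 V)) := G.edgeFinset.powerset.filter
      (fun M => ∀ e ∈ M, ∀ f ∈ M, e ≠ f → ∀ x ∈ e, x ∉ f) with h𝒮
  have hemptyM : (∅ : Finset (Sym2 V)) ∈ 𝒮 := by simp [h𝒮]
  obtain ⟨M, hM𝒮, hMmax⟩ := 𝒮.exists_max_image Finset.card ⟨∅, hemptyM⟩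
  rw [h𝒮, Finset.mem_filter, Finset.mem_powerset] at hM𝒮
  obtain ⟨hMedge, hMdisj⟩ := hM𝒮
  set matched : V → Prop := fun v => ∃ e ∈ M, v ∈ e with hmatched
  -- no augmenting edge
  have haug : ∀ u x, G.Adj u x → ¬ matched u → ¬ matched x → False := by
    intro u x hadj hu hx
    have hne : s(u, x) ∉ M := fun h => hu ⟨_, h, Sym2.mem_mk_left u x⟩
    have hmem : insert s(u, x) M ∈ 𝒮 := by
      rw [h𝒮, Finset.mem_filter, Finset.mem_powerset]
      constructor
      · intro e he
        rcases Finset.mem_insert.mp he with rfl | he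
        · exact SimpleGraph.mem_edgeFinset.mpr (G.mem_edgeSet.mpr hadj)
        · exact hMedge he
      · intro e he f hf hef y hye hyf
        rcases Finset.mem_insert.mp he with he' | he'
        · subst he'
          rcases Finset.mem_insert.mp hf with hf' | hf'
          · exact hef hf'.symm
          · rcases Sym2.mem_iff.mp hye with rfl | rfl
            · exact hu ⟨f, hf', hyf⟩
            · exact hx ⟨f, hf', hyf⟩
        · rcases Finset.mem_insert.mp hf with hf' | hf'
          · subst hf'
            rcases Sym2.mem_iff.mp hyf with rfl | rfl
            · exact hu ⟨e, he', hye⟩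
            · exact hx ⟨e, he', hye⟩
          · exact hMdisj e he' f hf' hef y hye hyf
    have := hMmax _ hmem
    rw [Finset.card_insert_of_notMem hne] at this
    omega
  -- partner of a matched vertex
  have hkey : ∀ v, ∃ w, matched v → s(v, w) ∈ M ∧ G.Adj v w := by
    intro v
    by_cases h : matched v
    · obtain ⟨e, heM, hve⟩ := h
      refine ⟨Sym2.Mem.other hve, fun _ => ?_⟩
      have hspec := Sym2.other_spec hve
      have h1 : s(v, Sym2.Mem.other hve) ∈ M := by rw [hspec]; exact heM
      refine ⟨h1, ?_⟩
      have h2 : s(v, Sym2.Mem.other hve) ∈ G.edgeFinset := hMedge h1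
      rw [SimpleGraph.mem_edgeFinset, SimpleGraph.mem_edgeSet] at h2
      exact h2
    · exact ⟨v, fun hv => absurd hv h⟩
  choose p hp using hkey
  have hpM : ∀ v, matched v → s(v, p v) ∈ M := fun v h => (hp v h).1
  have hpAdj : ∀ v, matched v → G.Adj v (p v) := fun v h => (hp v h).2
  have hpmatched : ∀ v, matched v → matched (p v) :=
    fun v h => ⟨_, hpM v h, Sym2.mem_mk_right v (p v)⟩
  have hunique : ∀ v, ∀ e ∈ M, ∀ f ∈ M, v ∈ e → v ∈ f → e = f := by
    intro v e he f hf hve hvf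
    by_contra hne
    exact hMdisj e he f hf hne v hve hvf
  have hpp : ∀ v, matched v → p (p v) = v := by
    intro v h
    have h1 : s(v, p v) ∈ M := hpM v h
    have h2 : s(p v, p (p v)) ∈ M := hpM _ (hpmatched v h)
    have h3 : s(p v, p (p v)) = s(v, p v) :=
      hunique (p v) _ h2 _ h1 (Sym2.mem_mk_left _ _) (Sym2.mem_mk_right _ _)
    exact Sym2.congr_right.mp (h3.trans Sym2.eq_swap)
  -- a chosen neighbor of each vertex
  set g : V → V := fun v => Classical.choose (hdeg v) with hgdef
  have hg : ∀ v, G.Adj v (g v) := fun v => Classical.choose_spec (hdeg v)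
  have hgmatched : ∀ v, ¬ matched v → matched (g v) := by
    intro v hv
    by_contra h
    exact haug v (g v) (hg v) hv h
  set A : V → Finset V := fun x => univ.filter (fun u => ¬ matched u ∧ g u = x) with hA
  -- the center function
  set c : V → V := fun v =>
    if matched v then
      (if (A v).Nonempty then v else if (A (p v)).Nonempty then p v else min v (p v))
    else g v with hc
  have hc_unmatched : ∀ v, ¬ matched v → c v = g v := by
    intro v hv; simp only [hc, if_neg hv]
  have hc_m1 : ∀ v, matched v → (A v).Nonempty → c v = v := by
    intro v h h1; simp only [hc, if_pos h, if_pos h1]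
  have hc_m2 : ∀ v, matched v → ¬(A v).Nonempty → (A (p v)).Nonempty → c v = p v := by
    intro v h h1 h2; simp only [hc, if_pos h, if_neg h1, if_pos h2]
  have hc_m3 : ∀ v, matched v → ¬(A v).Nonempty → ¬(A (p v)).Nonempty →
      c v = min v (p v) := by
    intro v h h1 h2; simp only [hc, if_pos h, if_neg h1, if_neg h2]
  have hmem_A : ∀ u, ¬ matched u → u ∈ A (g u) := by
    intro u hu; simp [hA, hu]
  have hA_spec : ∀ x, ∀ u ∈ A x, ¬ matched u ∧ g u = x := by
    intro x u hu; simpa [hA] using hu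
  -- idempotence of c
  have hcc : ∀ v, c (c v) = c v := by
    intro v
    by_cases hv : matched v
    · by_cases h1 : (A v).Nonempty
      · rw [hc_m1 v hv h1]; exact hc_m1 v hv h1
      · by_cases h2 : (A (p v)).Nonempty
        · rw [hc_m2 v hv h1 h2]; exact hc_m1 _ (hpmatched v hv) h2
        · rw [hc_m3 v hv h1 h2]
          rcases min_choice v (p v) with hm | hm
          · rw [hm, hc_m3 v hv h1 h2, hm]
          · rw [hm, hc_m3 _ (hpmatched v hv) h2 (by rw [hpp v hv]; exact h1),
              hpp v hv, min_comm, hm]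
    · rw [hc_unmatched v hv]
      exact hc_m1 _ (hgmatched v hv) ⟨v, hmem_A v hv⟩
  -- star property
  have hstar : ∀ v, c v = v ∨ G.Adj v (c v) := by
    intro v
    by_cases hv : matched v
    · by_cases h1 : (A v).Nonempty
      · left; exact hc_m1 v hv h1
      · by_cases h2 : (A (p v)).Nonempty
        · right; rw [hc_m2 v hv h1 h2]; exact hpAdj v hv
        · rw [hc_m3 v hv h1 h2]
          rcases min_choice v (p v) with hm | hm
          · left; rw [hm]
          · right; rw [hm]; exact hpAdj v hv
    · right; rw [hc_unmatched v hv]; exact hg v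
  -- every fiber contains a second element besides its center
  have hfib : ∀ v, ∃ x, x ≠ c v ∧ c x = c v := by
    intro v
    by_cases hv : matched v
    · by_cases h1 : (A v).Nonempty
      · obtain ⟨u, hu⟩ := h1
        obtain ⟨hu1, hu2⟩ := hA_spec v u hu
        refine ⟨u, ?_, ?_⟩
        · rw [hc_m1 v hv ⟨u, hu⟩]; intro h; exact hu1 (h ▸ hv)
        · rw [hc_m1 v hv ⟨u, hu⟩, hc_unmatched u hu1, hu2]
      · by_cases h2 : (A (p v)).Nonempty
        · refine ⟨v, ?_, rfl⟩
          rw [hc_m2 v hv h1 h2]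
          exact (hpAdj v hv).ne
        · have hvc := hc_m3 v hv h1 h2
          have hpc : c (p v) = min v (p v) := by
            rw [hc_m3 _ (hpmatched v hv) h2 (by rw [hpp v hv]; exact h1),
              hpp v hv, min_comm]
          have hne := (hpAdj v hv).ne
          rcases min_choice v (p v) with hm | hm
          · exact ⟨p v, by rw [hvc, hm]; exact fun h => hne h.symm,
              by rw [hpc, hvc]⟩
          · exact ⟨v, by rw [hvc, hm]; exact hne, by rw [hvc]⟩
    · refine ⟨v, ?_, rfl⟩
      rw [hc_unmatched v hv]
      intro h
      exact hv (h.symm ▸ hgmatched v hv)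
  -- the partition into fibers of c
  set s : Setoid V := Setoid.ker c with hs
  haveI : DecidableRel s.r := fun a b => decidable_of_iff (c a = c b) Iff.rfl
  set P0 := Finpartition.ofSetoid s with hP0def
  have hpart_iff : ∀ a b : V, b ∈ P0.part a ↔ c a = c b := by
    intro a b
    exact Finpartition.mem_part_ofSetoid_iff_rel
  have hq_char : ∀ q ∈ P0.parts, ∃ a, ∀ b, (b ∈ q ↔ c a = c b) := by
    intro q hq
    obtain ⟨a, ha⟩ := P0.nonempty_of_mem_parts hq
    have := P0.part_eq_of_mem hq ha
    exact ⟨a, fun b => by rw [← this]; exact hpart_iff a b⟩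
  -- each fiber has at least two elements
  have hcard2 : ∀ q ∈ P0.parts, 2 ≤ q.card := by
    intro q hq
    obtain ⟨a, ha⟩ := hq_char q hq
    obtain ⟨x, hx1, hx2⟩ := hfib a
    have hca : c a ∈ q := (ha (c a)).mpr (hcc a).symm
    have hxq : x ∈ q := (ha x).mpr hx2.symm
    rw [show (2:ℕ) = 1 + 1 by rfl]
    exact Finset.one_lt_card.mpr ⟨x, hxq, c a, hca, hx1⟩
  -- vertices in the same fiber are at distance at most 2
  have hdist : ∀ q ∈ P0.parts, ∀ u ∈ q, ∀ v ∈ q, G.Reachable u v ∧ G.dist u v ≤ 2 := by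
    intro q hq u hu v hv
    obtain ⟨a, ha⟩ := hq_char q hq
    have hcu : c u = c a := ((ha u).mp hu).symm
    have hcv : c v = c a := ((ha v).mp hv).symm
    by_cases huv : u = v
    · subst huv
      exact ⟨SimpleGraph.Reachable.refl u, by rw [SimpleGraph.dist_self]; omega⟩
    · have hsu : c a = u ∨ G.Adj u (c a) := by rw [← hcu]; exact hstar u
      have hsv : c a = v ∨ G.Adj v (c a) := by rw [← hcv]; exact hstar v
      rcases hsu with rfl | hsu
      · rcases hsv with rfl | hsv
        · exact absurd rfl huv
        · refine ⟨hsv.symm.reachable, ?_⟩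
          have h1 := SimpleGraph.dist_le (SimpleGraph.Walk.cons hsv.symm SimpleGraph.Walk.nil)
          simp at h1; omega
      · rcases hsv with rfl | hsv
        · refine ⟨hsu.reachable, ?_⟩
          have h1 := SimpleGraph.dist_le (SimpleGraph.Walk.cons hsu SimpleGraph.Walk.nil)
          simp at h1; omega
        · refine ⟨⟨SimpleGraph.Walk.cons hsu (SimpleGraph.Walk.cons hsv.symm SimpleGraph.Walk.nil)⟩, ?_⟩
          have h1 := SimpleGraph.dist_le
            (SimpleGraph.Walk.cons hsu (SimpleGraph.Walk.cons hsv.symm SimpleGraph.Walk.nil))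
          simpa using h1
  -- refine each fiber into parts of size 2 or 3
  choose Qs hQs using fun (q : Finset V) (hq : q ∈ P0.parts) =>
    finset_split_two_three q (hcard2 q hq)
  refine ⟨P0.bind Qs, ?_⟩
  intro pp hpp
  rw [Finpartition.mem_bind] at hpp
  obtain ⟨q, hq, hpq⟩ := hpp
  have hsub : pp ⊆ q := (Qs q hq).le hpq
  exact ⟨hQs q hq pp hpq, fun u hu v hv => hdist q hq u (hsub hu) v (hsub hv)⟩
end
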